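/- arXiv:math/0008009 — 4 statements merged into one kernel-verified Lean document; each statement's English description precedes it below -/
import Mathlib

section
/- Every maximum stable set of a tree T on at least 2 vertices contains at least one pendant vertex of T. -/
/-!
A tree is bipartite, so one of its two colour classes is a stable set with at least half of the
`n` vertices; hence a maximum stable set `S` has `n ≤ 2 |S|`. If no vertex of `S` were pendant,
every vertex of `S` would have degree at least `2`, and since no edge joins two vertices of `S`,
the edges at the vertices of `S` are pairwise distinct, giving at least `2 |S| ≥ n` edges, while a
tree has only `n - 1`.
-/

open Finset SimpleGraph
open scoped Classical

variable {V : Type*}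

/-- A stable (independent) set of vertices. -/
def stableSet (G : SimpleGraph V) (S : Finset V) : Prop :=
  ∀ u ∈ S, ∀ w ∈ S, ¬ G.Adj u w

/-- A maximum stable set. -/
def maxStableSet [Fintype V] (G : SimpleGraph V) (S : Finset V) : Prop :=
  stableSet G S ∧ ∀ S' : Finset V, stableSet G S' → S'.card ≤ S.card

/-- The independence number α(G). -/
noncomputable def alphaNum [Fintype V] (G : SimpleGraph V) : ℕ :=
  ((Finset.univ : Finset V).powerset.filter (fun S => stableSet G S)).sup Finset.card

/-- core(G): the intersection of all maximum stable sets of G. -/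
noncomputable def coreSet [Fintype V] (G : SimpleGraph V) : Finset V :=
  Finset.univ.filter (fun v => ∀ S : Finset V, maxStableSet G S → v ∈ S)

/-- A pendant vertex: a vertex with exactly one neighbor. -/
def pendant (G : SimpleGraph V) (v : V) : Prop :=
  ∃! w, G.Adj v w

/-- {A, B} is a bipartition of G into color classes. -/
def isBipartition [Fintype V] (G : SimpleGraph V) (A B : Finset V) : Prop :=
  Disjoint A B ∧ A ∪ B = Finset.univ ∧
    ∀ u v, G.Adj u v → (u ∈ A ∧ v ∈ B) ∨ (u ∈ B ∧ v ∈ A)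

lemma card_le_two_mul_card_of_maxStableSet [Fintype V] {G : SimpleGraph V} (hG : G.Colorable 2)
    {S : Finset V} (hS : maxStableSet G S) : Fintype.card V ≤ 2 * #S := by
  obtain ⟨C⟩ := hG
  have hA : stableSet G (univ.filter fun v => C v = 0) := by
    intro u hu w hw huw
    simp only [mem_filter, mem_univ, true_and] at hu hw
    exact C.valid huw (hu.trans hw.symm)
  have hB : stableSet G (univ.filter fun v => ¬ C v = 0) := by
    intro u hu w hw huw
    simp only [mem_filter, mem_univ, true_and] at hu hw
    exact C.valid huw (by omega) -- two nonzero elements of `Fin 2` are equal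
  have hcard := card_filter_add_card_filter_not (s := univ) fun v => C v = 0
  have hA_le := hS.2 _ hA
  have hB_le := hS.2 _ hB
  rw [card_univ] at hcard
  omega

lemma sum_degree_le_card_edgeFinset_of_stableSet [Fintype V] {G : SimpleGraph V}
    [DecidableRel G.Adj] {S : Finset V} (hS : stableSet G S) :
    ∑ s ∈ S, G.degree s ≤ #G.edgeFinset := by
  have hdisj : (S : Set V).PairwiseDisjoint fun s => G.incidenceFinset s := by
    intro s hs t ht hst
    rw [Function.onFun, Finset.disjoint_left]
    intro e hes het
    rw [mem_incidenceFinset] at hes het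
    obtain rfl : e = s(s, t) := (Sym2.mem_and_mem_iff hst).mp ⟨hes.2, het.2⟩
    exact hS s hs t ht hes.1
  calc ∑ s ∈ S, G.degree s = ∑ s ∈ S, #(G.incidenceFinset s) := by
        simp only [card_incidenceFinset_eq_degree]
    _ = #(S.biUnion fun s => G.incidenceFinset s) := (card_biUnion hdisj).symm
    _ ≤ #G.edgeFinset := card_le_card <| biUnion_subset.mpr fun s _ =>
        incidenceFinset_subset G s

lemma SimpleGraph.Preconnected.two_le_degree_of_not_pendant [Nontrivial V] {G : SimpleGraph V}
    (hG : G.Preconnected) {v : V} [Fintype (G.neighborSet v)] (hv : ¬ pendant G v) :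
    2 ≤ G.degree v := by
  obtain ⟨x, hx⟩ := G.degree_pos_iff_exists_adj v |>.mp (hG.degree_pos_of_nontrivial v)
  obtain ⟨y, hy, hyx⟩ : ∃ y, G.Adj v y ∧ y ≠ x := by
    by_contra! h
    exact hv ⟨x, hx, h⟩
  rw [← card_neighborFinset_eq_degree]
  exact one_lt_card_iff.mpr ⟨y, x, by simpa using hy, by simpa using hx, hyx⟩

theorem stmt3 [Fintype V] (T : SimpleGraph V) (hT : T.IsTree)
    (hn : 2 ≤ Fintype.card V) (S : Finset V) (hS : maxStableSet T S) :
    ∃ v ∈ S, pendant T v := by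
  by_contra! hS_pendant
  have : Nontrivial V := Fintype.one_lt_card_iff_nontrivial.mp hn
  have hdeg : ∀ s ∈ S, 2 ≤ T.degree s := fun s hs =>
    hT.connected.preconnected.two_le_degree_of_not_pendant (hS_pendant s hs)
  have hedges : 2 * #S ≤ #T.edgeFinset :=
    calc 2 * #S = ∑ _s ∈ S, 2 := by rw [sum_const, smul_eq_mul, mul_comm]
      _ ≤ ∑ s ∈ S, T.degree s := sum_le_sum hdeg
      _ ≤ #T.edgeFinset := sum_degree_le_card_edgeFinset_of_stableSet hS.1
  have hS_half := card_le_two_mul_card_of_maxStableSet hT.colorable_two hS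
  have hT_edges := hT.card_edgeFinset
  omega
end

section
/- If T is a tree on n ≥ 2 vertices with α(T) = n/2, then T contains two pendant vertices at odd distance from each other. -/
/-!
Two-colour the tree. A colour class `A` is stable, so `|A| ≤ α(T) = n/2` and the other class `B`
has `|B| ≥ n/2`. Every edge has exactly one end in `B`, so the degrees over `B` add up to
`n - 1 < 2|B|`; hence some vertex of `B`, having positive degree, is a leaf. This holds for both
classes, and leaves of different colours are at odd distance.
-/

open Finset SimpleGraph
open scoped Classical

variable {V : Type*}

lemma card_le_alphaNum [Fintype V] {G : SimpleGraph V} {S : Finset V} (hS : stableSet G S) :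
    #S ≤ alphaNum G :=
  le_sup (f := Finset.card) (mem_filter.2 ⟨mem_powerset.2 (subset_univ S), hS⟩)

lemma pendant_iff_degree_eq_one {G : SimpleGraph V} {v : V} [Fintype (G.neighborSet v)] :
    pendant G v ↔ G.degree v = 1 :=
  degree_eq_one_iff_existsUnique_adj.symm

namespace SimpleGraph.Coloring

variable {G : SimpleGraph V}

lemma stableSet_filter_eq [Fintype V] {α : Type*} [DecidableEq α] (c : G.Coloring α) (a : α) :
    stableSet G {v | c v = a} := by
  intro u hu w hw huw
  rw [mem_filter] at hu hw
  exact c.valid huw (hu.2.trans hw.2.symm)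

lemma isBipartiteWith_filter_eq [Fintype V] (c : G.Coloring Bool) (b : Bool) :
    G.IsBipartiteWith (↑({v | c v = b} : Finset V)) (↑({v | c v = !b} : Finset V)) where
  disjoint := by
    rw [Set.disjoint_left]
    intro v hb hnb
    simp only [coe_filter, mem_univ, true_and, Set.mem_ofPred_eq] at hb hnb
    simp [hb] at hnb
  mem_of_adj v w hvw := by
    have := c.valid hvw
    simp only [coe_filter, mem_univ, true_and, Set.mem_ofPred_eq]
    cases b <;> cases hv : c v <;> cases hw : c w <;> simp_all

lemma exists_pendant_of_card_edgeFinset_lt [Fintype V] [Nontrivial V] (hG : G.Preconnected)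
    (c : G.Coloring Bool) (b : Bool) (hlt : #G.edgeFinset < 2 * #{v | c v = b}) :
    ∃ v, pendant G v ∧ c v = b := by
  by_contra! hno
  have hdeg : ∀ v ∈ ({v | c v = b} : Finset V), 2 ≤ G.degree v := by
    intro v hv
    have hpos := hG.degree_pos_of_nontrivial v
    have hne : G.degree v ≠ 1 := fun h ↦
      hno v (pendant_iff_degree_eq_one.2 h) (mem_filter.1 hv).2
    omega
  have hge : 2 * #{v | c v = b} ≤ #G.edgeFinset :=
    calc 2 * #{v | c v = b}
        = ∑ _v ∈ {v | c v = b}, 2 := by rw [sum_const, smul_eq_mul, mul_comm]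
      _ ≤ ∑ v ∈ {v | c v = b}, G.degree v := sum_le_sum hdeg
      _ = #G.edgeFinset :=
        isBipartiteWith_sum_degrees_eq_card_edges (c.isBipartiteWith_filter_eq b)
  omega

lemma odd_dist_of_ne (hG : G.Connected) (c : G.Coloring Bool) {u v : V} (huv : c u ≠ c v) :
    Odd (G.dist u v) := by
  obtain ⟨p, hp⟩ := hG.exists_walk_length_eq_dist u v
  rw [← hp, c.odd_length_iff_not_congr]
  cases hu : c u <;> cases hv : c v <;> simp_all

end SimpleGraph.Coloring

lemma SimpleGraph.IsTree.exists_pendant_of_two_mul_alphaNum_eq [Fintype V] {T : SimpleGraph V}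
    (hT : T.IsTree) (hn : 2 ≤ Fintype.card V) (halpha : 2 * alphaNum T = Fintype.card V)
    (c : T.Coloring Bool) (b : Bool) : ∃ v, pendant T v ∧ c v = b := by
  have : Nontrivial V := Fintype.one_lt_card_iff_nontrivial.1 hn
  apply c.exists_pendant_of_card_edgeFinset_lt hT.connected.preconnected b
  have hother := card_le_alphaNum (c.stableSet_filter_eq !b)
  have hsplit : #({v | c v = b} : Finset V) + #({v | c v = !b} : Finset V) = Fintype.card V := by
    simpa only [Bool.eq_not_iff, ne_eq, card_univ] using
      card_filter_add_card_filter_not (s := univ) (p := fun v ↦ c v = b)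
  have hedges := hT.card_edgeFinset
  omega

theorem stmt5 [Fintype V] (T : SimpleGraph V) (hT : T.IsTree)
    (hn : 2 ≤ Fintype.card V) (halpha : 2 * alphaNum T = Fintype.card V) :
    ∃ u v : V, u ≠ v ∧ pendant T u ∧ pendant T v ∧ Odd (T.dist u v) := by
  let c : T.Coloring Bool := T.recolorOfEquiv finTwoEquiv hT.coloringTwo
  obtain ⟨u, hu, hcu⟩ := hT.exists_pendant_of_two_mul_alphaNum_eq hn halpha c true
  obtain ⟨v, hv, hcv⟩ := hT.exists_pendant_of_two_mul_alphaNum_eq hn halpha c false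
  have hcuv : c u ≠ c v := by simp [hcu, hcv]
  exact ⟨u, v, fun h ↦ hcuv (congrArg c h), hu, hv, c.odd_dist_of_ne hT.connected hcuv⟩
end

section
/- For a tree T on n ≥ 2 vertices, α(T) > n/2 if and only if |core(T)| ≥ 2, where core(T) is the intersection of all maximum stable sets of T. -/
open Finset SimpleGraph
open scoped Classical

variable {V : Type*}

/-! ### Auxiliary machinery -/

section Aux
variable [Fintype V]

/-- Matchings of `G` whose edges have all endpoints inside `U`. -/
def isMatchingOn (G : SimpleGraph V) (U : Finset V) (M : Finset (Sym2 V)) : Prop :=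
  (∀ e ∈ M, e ∈ G.edgeSet ∧ ∀ v ∈ e, v ∈ U) ∧
  ∀ e ∈ M, ∀ f ∈ M, e ≠ f → ∀ v ∈ e, v ∉ f

lemma stable_card_le_alpha {G : SimpleGraph V} {S : Finset V}
    (hS : stableSet G S) : S.card ≤ alphaNum G := by
  apply Finset.le_sup
  simp [Finset.mem_filter, hS]

lemma exists_maxStableSet (G : SimpleGraph V) :
    ∃ S, maxStableSet G S ∧ S.card = alphaNum G := by
  have hne : ((Finset.univ : Finset V).powerset.filter (fun S => stableSet G S)).Nonempty := by
    refine ⟨∅, ?_⟩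
    simp [stableSet]
  obtain ⟨S, hSmem, hScard⟩ := Finset.exists_mem_eq_sup _ hne Finset.card
  simp only [Finset.mem_filter] at hSmem
  exact ⟨S, ⟨hSmem.2, fun S' hS' => hScard ▸ stable_card_le_alpha hS'⟩, hScard.symm⟩

lemma maxStableSet_card {G : SimpleGraph V} {S : Finset V}
    (h : maxStableSet G S) : S.card = alphaNum G := by
  obtain ⟨S₀, hS₀, hc⟩ := exists_maxStableSet G
  exact le_antisymm (stable_card_le_alpha h.1) (hc ▸ h.2 S₀ hS₀.1)

lemma mem_coreSet {G : SimpleGraph V} {v : V} :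
    v ∈ coreSet G ↔ ∀ S : Finset V, maxStableSet G S → v ∈ S := by
  simp [coreSet]

/-- Counting: a stable set and a matching avoiding `X \ S` fit inside `V`. -/
lemma matching_bound {G : SimpleGraph V} {S : Finset V} {M : Finset (Sym2 V)}
    (hS : stableSet G S) (hM : isMatchingOn G Finset.univ M) (X : Finset V)
    (hmiss : ∀ e ∈ M, ∀ v ∈ e, v ∉ X \ S) :
    X.card + M.card ≤ Fintype.card V := by
  classical
  set f : Sym2 V → V := fun e => if e.out.1 ∈ S then e.out.2 else e.out.1 with hf
  have hfe : ∀ e ∈ M, f e ∈ e ∧ f e ∉ S := by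
    intro e he
    have hedge := (hM.1 e he).1
    have hadj : G.Adj e.out.1 e.out.2 := by
      rw [← SimpleGraph.mem_edgeSet]
      have h : s((Quot.out e).1, (Quot.out e).2) = e := Quot.out_eq e
      rw [← h] at hedge
      exact hedge
    by_cases h1 : e.out.1 ∈ S
    · refine ⟨by simp [hf, h1, Sym2.out_snd_mem], ?_⟩
      simp only [hf, if_pos h1]
      intro h2
      exact hS _ h1 _ h2 hadj
    · exact ⟨by simp [hf, h1, Sym2.out_fst_mem], by simp [hf, h1, h1]⟩
  have hinj : Set.InjOn f M := by
    intro e he e' he' hfeq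
    by_contra hne
    exact hM.2 e he e' he' hne (f e) (hfe e he).1 (hfeq ▸ (hfe e' he').1)
  have himg : M.image f ⊆ Xᶜ := by
    intro w hw
    simp only [Finset.mem_image] at hw
    obtain ⟨e, he, rfl⟩ := hw
    simp only [Finset.mem_compl]
    intro hwX
    have := hmiss e he (f e) (hfe e he).1
    exact this (Finset.mem_sdiff.2 ⟨hwX, (hfe e he).2⟩)
  have h1 : M.card ≤ Xᶜ.card := by
    rw [← Finset.card_image_of_injOn hinj]
    exact Finset.card_le_card himg
  rw [Finset.card_compl] at h1
  have h2 : X.card ≤ Fintype.card V := Finset.card_le_univ X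
  omega

omit [Fintype V] in
lemma concat_isPath {G : SimpleGraph V} {u v w : V} {p : G.Walk u v} (hp : p.IsPath)
    (h : G.Adj v w) (hw : w ∉ p.support) : (p.concat h).IsPath := by
  rw [← Walk.isPath_reverse_iff, Walk.reverse_concat]
  exact (Walk.cons_isPath_iff _ _).2 ⟨(Walk.isPath_reverse_iff p).2 hp,
    by simpa [Walk.support_reverse] using hw⟩

omit [Fintype V] in
lemma tree_adj_dist_ne {G : SimpleGraph V} (hG : G.IsTree) (r : V) {u v : V}
    (huv : G.Adj u v) : G.dist r u ≠ G.dist r v := by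
  intro heq
  obtain ⟨p, hp, hpl⟩ := (hG.isConnected.preconnected r u).exists_path_of_dist
  obtain ⟨q, hq, hql⟩ := (hG.isConnected.preconnected r v).exists_path_of_dist
  have huniq := isAcyclic_iff_path_unique.mp hG.IsAcyclic
  by_cases hv : v ∈ p.support
  · have h1 : G.dist r v ≤ (p.takeUntil v hv).length := SimpleGraph.dist_le _
    have h2 : (p.takeUntil v hv).length ≤ p.length := Walk.length_takeUntil_le p hv
    have h3 : (p.takeUntil v hv).length = p.length := by omega
    have h4 := Walk.take_spec p hv
    have h5 : p.length = (p.takeUntil v hv).length + (p.dropUntil v hv).length := by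
      conv_lhs => rw [← h4]
      exact Walk.length_append _ _
    have h6 : (p.dropUntil v hv).length = 0 := by omega
    have h7 : v = u := Walk.eq_of_length_eq_zero h6
    exact huv.ne h7.symm
  · have hq' : (p.concat huv).IsPath := concat_isPath hp huv hv
    have := huniq ⟨p.concat huv, hq'⟩ ⟨q, hq⟩
    have hlen : (p.concat huv).length = q.length := by
      have h9 : (⟨p.concat huv, hq'⟩ : G.Path r v).1 = (⟨q, hq⟩ : G.Path r v).1 := by rw [this]
      simp only at h9
      rw [h9]
    rw [Walk.length_concat] at hlen
    omega

omit [Fintype V] in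
lemma tree_adj_dist_le {G : SimpleGraph V} (hG : G.IsTree) (r : V) {u v : V}
    (huv : G.Adj u v) : G.dist r v ≤ G.dist r u + 1 := by
  obtain ⟨p, hp, hpl⟩ := (hG.isConnected.preconnected r u).exists_path_of_dist
  have := SimpleGraph.dist_le (p.concat huv)
  rw [Walk.length_concat] at this
  omega

lemma tree_bipartition {G : SimpleGraph V} (hG : G.IsTree) (r : V) :
    ∃ A B : Finset V, Disjoint A B ∧ A ∪ B = Finset.univ ∧
      stableSet G A ∧ stableSet G B := by
  refine ⟨Finset.univ.filter (fun v => G.dist r v % 2 = 0),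
    Finset.univ.filter (fun v => G.dist r v % 2 = 1), ?_, ?_, ?_, ?_⟩
  · simp only [Finset.disjoint_filter, Finset.mem_filter]
    intro x _ h1 h2
    rw [h1] at h2
    exact absurd h2 (by norm_num)
  · ext x
    simp only [Finset.mem_union, Finset.mem_filter, Finset.mem_univ, true_and, iff_true]
    omega
  · intro u hu w hw hadj
    simp only [Finset.mem_filter] at hu hw
    have h1 := tree_adj_dist_ne hG r hadj
    have h2 := tree_adj_dist_le hG r hadj
    have h3 := tree_adj_dist_le hG r hadj.symm
    omega
  · intro u hu w hw hadj
    simp only [Finset.mem_filter] at hu hw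
    have h1 := tree_adj_dist_ne hG r hadj
    have h2 := tree_adj_dist_le hG r hadj
    have h3 := tree_adj_dist_le hG r hadj.symm
    omega

lemma exists_pendant_in {G : SimpleGraph V} (hG : G.IsAcyclic) {U : Finset V}
    (hU : U.Nonempty) (hdeg : ∀ v ∈ U, ∃ w ∈ U, G.Adj v w) :
    ∃ p ∈ U, ∃ q ∈ U, G.Adj p q ∧ ∀ w ∈ U, G.Adj p w → w = q := by
  classical
  have huniq := isAcyclic_iff_path_unique.mp hG
  set pred : ℕ → Prop := fun n => ∃ (a u : V) (w : G.Walk a u), w.IsPath ∧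
    (∀ x ∈ w.support, x ∈ U) ∧ w.length = n with hpred
  obtain ⟨v₀, hv₀⟩ := hU
  obtain ⟨w₀, hw₀U, hw₀⟩ := hdeg v₀ hv₀
  have hpred1 : pred 1 := by
    refine ⟨v₀, w₀, Walk.cons hw₀ Walk.nil, ?_, ?_, rfl⟩
    · simp [Walk.isPath_def, hw₀.ne]
    · intro x hx
      simp only [Walk.support_cons, Walk.support_nil, List.mem_cons, List.mem_singleton] at hx
      rcases hx with rfl | hx
      · exact hv₀
      · simp only [List.mem_cons, List.not_mem_nil, or_false] at hx
        exact hx ▸ hw₀U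
  have hcard : 1 ≤ Fintype.card V := Fintype.card_pos_iff.2 ⟨v₀⟩
  set L := Nat.findGreatest pred (Fintype.card V) with hL
  have hLspec : pred L := Nat.findGreatest_spec hcard hpred1
  have hLmax : ∀ m, L < m → m ≤ Fintype.card V → ¬ pred m := by
    intro m h1 h2
    exact Nat.findGreatest_is_greatest h1 h2
  obtain ⟨a, u, p, hp, hsup, hlen⟩ := hLspec
  have huU : u ∈ U := hsup u p.end_mem_support
  have hmem : ∀ w ∈ U, G.Adj u w → w ∈ p.support := by
    intro w hwU hadj
    by_contra hws
    have hpath : (p.concat hadj).IsPath := concat_isPath hp hadj hws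
    have hlt : (p.concat hadj).length < Fintype.card V := hpath.length_lt
    refine hLmax (L + 1) (Nat.lt_succ_self L) ?_ ⟨a, w, p.concat hadj, hpath, ?_, ?_⟩
    · rw [Walk.length_concat] at hlt; omega
    · intro x hx
      rw [Walk.support_concat, List.mem_append] at hx
      rcases hx with hx | hx
      · exact hsup x hx
      · simp only [List.mem_singleton] at hx; exact hx ▸ hwU
    · rw [Walk.length_concat, hlen]
  have hkey : ∀ w ∈ U, G.Adj u w → w = p.reverse.getVert 1 := by
    intro w hwU hadj
    have hws : w ∈ p.support := hmem w hwU hadj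
    set q := p.takeUntil w hws with hq
    have hqpath : q.IsPath := hp.takeUntil hws
    have huq : u ∉ q.support := by
      intro huq
      have hspec := Walk.take_spec p hws
      set d := p.dropUntil w hws with hd
      have hnodup := hp.support_nodup
      rw [← hspec, Walk.support_append] at hnodup
      have hdisj := (List.nodup_append.mp hnodup).2.2
      have hud : u ∈ d.support.tail := by
        have h1 : u ∈ d.support := d.end_mem_support
        rw [d.support_eq_cons] at h1
        rcases List.mem_cons.mp h1 with h2 | h2
        · exact absurd h2 hadj.ne
        · exact h2
      exact hdisj u huq u hud rfl
    have hcpath : (q.concat hadj.symm).IsPath := concat_isPath hqpath hadj.symm huq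
    have hpq : q.concat hadj.symm = p := by
      have := huniq ⟨q.concat hadj.symm, hcpath⟩ ⟨p, hp⟩
      exact congrArg Subtype.val this
    have hrev : p.reverse = Walk.cons hadj q.reverse := by
      rw [← hpq, Walk.reverse_concat]
    rw [hrev, Walk.getVert_cons _ _ one_ne_zero, Nat.sub_self, Walk.getVert_zero]
  obtain ⟨q₀, hq₀U, hq₀adj⟩ := hdeg u huU
  refine ⟨u, huU, q₀, hq₀U, hq₀adj, ?_⟩
  intro w hwU hadj
  rw [hkey w hwU hadj, hkey q₀ hq₀U hq₀adj]

lemma forest_decomp {G : SimpleGraph V} (hG : G.IsAcyclic) (U : Finset V) :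
    ∃ (S : Finset V) (M : Finset (Sym2 V)), S ⊆ U ∧ stableSet G S ∧ isMatchingOn G U M ∧
      S.card + M.card = U.card := by
  classical
  induction U using Finset.strongInduction with
  | _ U ih =>
    rcases Finset.eq_empty_or_nonempty U with rfl | hU
    · exact ⟨∅, ∅, by simp, by simp [stableSet], ⟨by simp, by simp⟩, by simp⟩
    by_cases hiso : ∃ v ∈ U, ∀ w ∈ U, ¬ G.Adj v w
    · obtain ⟨v, hvU, hv⟩ := hiso
      obtain ⟨S, M, hSU, hS, hM, hcard⟩ := ih (U.erase v) (Finset.erase_ssubset hvU)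
      have hvS : v ∉ S := fun h => (Finset.mem_erase.mp (hSU h)).1 rfl
      refine ⟨insert v S, M, ?_, ?_, ?_, ?_⟩
      · intro x hx
        rcases Finset.mem_insert.mp hx with rfl | hx
        · exact hvU
        · exact Finset.erase_subset _ _ (hSU hx)
      · intro x hx y hy hadj
        rcases Finset.mem_insert.mp hx with hx1 | hx1
        · rcases Finset.mem_insert.mp hy with hy1 | hy1
          · exact hadj.ne (hx1.trans hy1.symm)
          · exact hv y (Finset.erase_subset _ _ (hSU hy1)) (hx1 ▸ hadj)
        · rcases Finset.mem_insert.mp hy with hy1 | hy1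
          · exact hv x (Finset.erase_subset _ _ (hSU hx1)) (hy1 ▸ hadj.symm)
          · exact hS x hx1 y hy1 hadj
      · exact ⟨fun e he => ⟨(hM.1 e he).1,
          fun x hx => Finset.erase_subset _ _ ((hM.1 e he).2 x hx)⟩, hM.2⟩
      · rw [Finset.card_insert_of_notMem hvS]
        rw [Finset.card_erase_of_mem hvU] at hcard
        have : 1 ≤ U.card := Finset.card_pos.mpr hU
        omega
    · push_neg at hiso
      obtain ⟨p, hpU, q, hqU, hpq, huniq⟩ := exists_pendant_in hG hU hiso
      have hqp : q ≠ p := hpq.ne'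
      set U' := (U.erase p).erase q with hU'
      have hqe : q ∈ U.erase p := Finset.mem_erase.mpr ⟨hqp, hqU⟩
      have hss : U' ⊂ U :=
        Finset.ssubset_of_subset_of_ssubset (Finset.erase_subset q _)
          (Finset.erase_ssubset hpU)
      obtain ⟨S, M, hSU, hS, hM, hcard⟩ := ih U' hss
      have hpU' : p ∉ U' := fun h =>
        (Finset.mem_erase.mp (Finset.mem_erase.mp h).2).1 rfl
      have hqU' : q ∉ U' := fun h => (Finset.mem_erase.mp h).1 rfl
      have hxU : ∀ x ∈ U', x ∈ U := fun x hx =>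
        Finset.erase_subset _ _ (Finset.erase_subset _ _ hx)
      have hpS : p ∉ S := fun h => hpU' (hSU h)
      have hqS : q ∉ S := fun h => hqU' (hSU h)
      have hmempq : ∀ v, v ∈ (s(p, q) : Sym2 V) → v = p ∨ v = q := by
        intro v hv; rwa [Sym2.mem_iff] at hv
      have hpqM : (s(p, q) : Sym2 V) ∉ M := by
        intro h
        exact hpU' ((hM.1 _ h).2 p (Sym2.mem_mk_left p q))
      refine ⟨insert p S, insert s(p, q) M, ?_, ?_, ⟨?_, ?_⟩, ?_⟩
      · intro x hx
        rcases Finset.mem_insert.mp hx with hx1 | hx1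
        · exact hx1 ▸ hpU
        · exact hxU x (hSU hx1)
      · intro x hx y hy hadj
        rcases Finset.mem_insert.mp hx with hx1 | hx1
        · rcases Finset.mem_insert.mp hy with hy1 | hy1
          · exact hadj.ne (hx1.trans hy1.symm)
          · exact hqS ((huniq y (hxU y (hSU hy1)) (hx1 ▸ hadj)) ▸ hy1)
        · rcases Finset.mem_insert.mp hy with hy1 | hy1
          · exact hqS ((huniq x (hxU x (hSU hx1)) (hy1 ▸ hadj.symm)) ▸ hx1)
          · exact hS x hx1 y hy1 hadj
      · intro e he
        rcases Finset.mem_insert.mp he with he1 | he1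
        · subst he1
          refine ⟨(SimpleGraph.mem_edgeSet G).mpr hpq, ?_⟩
          intro v hv
          rcases hmempq v hv with hv1 | hv1
          · exact hv1 ▸ hpU
          · exact hv1 ▸ hqU
        · exact ⟨(hM.1 e he1).1, fun v hv => hxU v ((hM.1 e he1).2 v hv)⟩
      · intro e he f hf hne v hv
        rcases Finset.mem_insert.mp he with he1 | he1
        · rcases Finset.mem_insert.mp hf with hf1 | hf1
          · exact absurd (he1.trans hf1.symm) hne
          · intro hvf
            rcases hmempq v (he1 ▸ hv) with hv1 | hv1
            · exact hpU' (hv1 ▸ (hM.1 f hf1).2 v hvf)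
            · exact hqU' (hv1 ▸ (hM.1 f hf1).2 v hvf)
        · rcases Finset.mem_insert.mp hf with hf1 | hf1
          · intro hvf
            rcases hmempq v (hf1 ▸ hvf) with hv1 | hv1
            · exact hpU' (hv1 ▸ (hM.1 e he1).2 v hv)
            · exact hqU' (hv1 ▸ (hM.1 e he1).2 v hv)
          · exact hM.2 e he1 f hf1 hne v hv
      · rw [Finset.card_insert_of_notMem hpS, Finset.card_insert_of_notMem hpqM]
        have h1 : (U.erase p).card = U.card - 1 := Finset.card_erase_of_mem hpU
        have h2 : U'.card = (U.erase p).card - 1 := Finset.card_erase_of_mem hqe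
        have h3 : 1 ≤ (U.erase p).card := Finset.card_pos.mpr ⟨q, hqe⟩
        have h4 : 1 ≤ U.card := Finset.card_pos.mpr hU
        omega

/-- A vertex missed by a large matching lies in every maximum stable set. -/
lemma missed_mem_core {G : SimpleGraph V} {M : Finset (Sym2 V)}
    (hM : isMatchingOn G Finset.univ M)
    (hMcard : Fintype.card V ≤ alphaNum G + M.card)
    {v : V} (hmiss : ∀ e ∈ M, v ∉ e) : v ∈ coreSet G := by
  rw [mem_coreSet]
  intro S hS
  by_contra hvS
  have hkey := matching_bound hS.1 hM (insert v S) ?_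
  · rw [Finset.card_insert_of_notMem hvS, maxStableSet_card hS] at hkey
    omega
  · intro e he x hx hmem
    rw [Finset.mem_sdiff] at hmem
    have : x = v := by
      rcases Finset.mem_insert.mp hmem.1 with h | h
      · exact h
      · exact absurd h hmem.2
    exact hmiss e he (this ▸ hx)

end Aux

theorem stmt10 [Fintype V] (T : SimpleGraph V) (hT : T.IsTree)
    (hn : 2 ≤ Fintype.card V) :
    Fintype.card V < 2 * alphaNum T ↔ 2 ≤ (coreSet T).card := by
  classical
  have hne : Nonempty V := Fintype.card_pos_iff.mp (by omega)
  constructor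
  · -- α > n/2 → |core| ≥ 2
    intro hlt
    -- a matching of size ≥ n - α exists
    obtain ⟨S₀, M₀, _, hS₀, hM₀, hsum₀⟩ := forest_decomp hT.IsAcyclic Finset.univ
    rw [Finset.card_univ] at hsum₀
    have hS₀le : S₀.card ≤ alphaNum T := stable_card_le_alpha hS₀
    -- the family of matchings and a maximum one
    set 𝓜 := (T.edgeFinset.powerset).filter (fun M => isMatchingOn T Finset.univ M) with h𝓜
    have hmem𝓜 : ∀ M : Finset (Sym2 V), isMatchingOn T Finset.univ M → M ∈ 𝓜 := by
      intro M hM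
      rw [h𝓜, Finset.mem_filter, Finset.mem_powerset]
      exact ⟨fun e he => SimpleGraph.mem_edgeFinset.mpr ((hM.1 e he).1), hM⟩
    have h𝓜ne : 𝓜.Nonempty := ⟨∅, hmem𝓜 ∅ ⟨by simp, by simp⟩⟩
    obtain ⟨M, hMmem, hMmax⟩ := Finset.exists_max_image 𝓜 Finset.card h𝓜ne
    have hM : isMatchingOn T Finset.univ M := (Finset.mem_filter.mp hMmem).2
    have hMge : Fintype.card V ≤ alphaNum T + M.card := by
      have := hMmax M₀ (hmem𝓜 M₀ hM₀)
      omega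
    -- easy bound
    obtain ⟨Sα, hSα, hSαcard⟩ := exists_maxStableSet T
    have hMle : alphaNum T + M.card ≤ Fintype.card V := by
      have := matching_bound hSα.1 hM Sα (by intro e he x hx h; simp at h)
      omega
    -- some vertex is missed by M
    have hmissed : ∃ v : V, ∀ e ∈ M, v ∉ e := by
      by_contra hall
      push_neg at hall
      have hcov : Fintype.card V ≤ 2 * M.card := by
        have key : (Finset.univ : Finset V).card ≤ 2 * ((Finset.univ : Finset V).image
            (fun v => Classical.choose (hall v))).card := by
          apply Finset.card_le_mul_card_image
          intro e _
          have hsub : (Finset.univ.filter (fun v => Classical.choose (hall v) = e)) ⊆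
              ({e.out.1, e.out.2} : Finset V) := by
            intro x hx
            rw [Finset.mem_filter] at hx
            have hspec := Classical.choose_spec (hall x)
            rw [hx.2] at hspec
            have hxe : x ∈ e := hspec.2
            have : s((Quot.out e).1, (Quot.out e).2) = e := Quot.out_eq e
            rw [← this, Sym2.mem_iff] at hxe
            simp only [Finset.mem_insert, Finset.mem_singleton]
            exact hxe
          calc (Finset.univ.filter (fun v => Classical.choose (hall v) = e)).card
              ≤ ({e.out.1, e.out.2} : Finset V).card := Finset.card_le_card hsub
            _ ≤ 2 := le_trans (Finset.card_insert_le _ _) (by simp)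
        have himg : ((Finset.univ : Finset V).image (fun v => Classical.choose (hall v))) ⊆ M := by
          intro e he
          rw [Finset.mem_image] at he
          obtain ⟨v, _, rfl⟩ := he
          exact (Classical.choose_spec (hall v)).1
        have := Finset.card_le_card himg
        rw [Finset.card_univ] at key
        omega
      omega
    obtain ⟨v, hv⟩ := hmissed
    have hvcore : v ∈ coreSet T := missed_mem_core hM hMge hv
    -- v has a neighbor u
    obtain ⟨w, hwv⟩ := Fintype.exists_ne_of_one_lt_card (by omega : 1 < Fintype.card V) v
    have hadj : ∃ u : V, T.Adj v u := by
      obtain ⟨wk⟩ := hT.isConnected.preconnected v w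
      cases wk with
      | nil => exact absurd rfl hwv.symm
      | cons h _ => exact ⟨_, h⟩
    obtain ⟨u, hvu⟩ := hadj
    -- u is covered by M
    have hucov : ∃ e ∈ M, u ∈ e := by
      by_contra hucov
      push_neg at hucov
      have hM' : isMatchingOn T Finset.univ (insert s(v, u) M) := by
        constructor
        · intro e he
          rcases Finset.mem_insert.mp he with he1 | he1
          · exact he1 ▸ ⟨(SimpleGraph.mem_edgeSet T).mpr hvu, fun x _ => Finset.mem_univ x⟩
          · exact (hM.1 e he1)
        · intro e he f hf hnef x hx
          rcases Finset.mem_insert.mp he with he1 | he1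
          · intro hxf
            rcases Finset.mem_insert.mp hf with hf1 | hf1
            · exact hnef (he1.trans hf1.symm)
            · rcases Sym2.mem_iff.mp (he1 ▸ hx) with hx1 | hx1
              · exact hv f hf1 (hx1 ▸ hxf)
              · exact hucov f hf1 (hx1 ▸ hxf)
          · intro hxf
            rcases Finset.mem_insert.mp hf with hf1 | hf1
            · rcases Sym2.mem_iff.mp (hf1 ▸ hxf) with hx1 | hx1
              · exact hv e he1 (hx1 ▸ hx)
              · exact hucov e he1 (hx1 ▸ hx)
            · exact hM.2 e he1 f hf1 hnef x hx hxf
      have hnotmem : (s(v, u) : Sym2 V) ∉ M := fun h => hv _ h (Sym2.mem_mk_left v u)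
      have := hMmax _ (hmem𝓜 _ hM')
      rw [Finset.card_insert_of_notMem hnotmem] at this
      omega
    obtain ⟨e, heM, hue⟩ := hucov
    set u' := Sym2.Mem.other hue with hu'
    have hspec : s(u, u') = e := Sym2.other_spec hue
    have hu'e : u' ∈ e := Sym2.other_mem hue
    have hadjuu' : T.Adj u u' := (SimpleGraph.mem_edgeSet T).mp (hspec ▸ (hM.1 e heM).1)
    have hu'u : u' ≠ u := hadjuu'.ne'
    have hu'v : u' ≠ v := fun h => hv e heM (h ▸ hu'e)
    have huv : u ≠ v := hvu.ne'
    -- the swapped matching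
    set M' := insert s(u, v) (M.erase e) with hM'def
    have hvnotM : ∀ f ∈ M.erase e, ∀ x ∈ (s(u, v) : Sym2 V), x ∉ f := by
      intro f hf x hx
      rcases Sym2.mem_iff.mp hx with hx1 | hx1
      · subst hx1
        intro hxf
        exact hM.2 e heM f (Finset.mem_of_mem_erase hf)
          (fun h => (Finset.mem_erase.mp hf).1 h.symm) x hue hxf
      · subst hx1
        exact hv f (Finset.mem_of_mem_erase hf)
    have hM'matching : isMatchingOn T Finset.univ M' := by
      constructor
      · intro f hf
        rcases Finset.mem_insert.mp hf with hf1 | hf1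
        · exact hf1 ▸ ⟨(SimpleGraph.mem_edgeSet T).mpr hvu.symm, fun x _ => Finset.mem_univ x⟩
        · exact hM.1 f (Finset.mem_of_mem_erase hf1)
      · intro f hf g hg hnefg x hx
        rcases Finset.mem_insert.mp hf with hf1 | hf1
        · rcases Finset.mem_insert.mp hg with hg1 | hg1
          · exact absurd (hf1.trans hg1.symm) hnefg
          · exact hvnotM g hg1 x (hf1 ▸ hx)
        · rcases Finset.mem_insert.mp hg with hg1 | hg1
          · intro hxg
            exact hvnotM f hf1 x (hg1 ▸ hxg) hx
          · exact hM.2 f (Finset.mem_of_mem_erase hf1) g (Finset.mem_of_mem_erase hg1) hnefg x hx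
    have hsvuM : (s(u, v) : Sym2 V) ∉ M.erase e := by
      intro h
      exact hv _ (Finset.mem_of_mem_erase h) (Sym2.mem_mk_right u v)
    have hM'card : M'.card = M.card := by
      rw [hM'def, Finset.card_insert_of_notMem hsvuM, Finset.card_erase_of_mem heM]
      have : 1 ≤ M.card := Finset.card_pos.mpr ⟨e, heM⟩
      omega
    have hu'miss : ∀ f ∈ M', u' ∉ f := by
      intro f hf
      rcases Finset.mem_insert.mp hf with hf1 | hf1
      · subst hf1
        rw [Sym2.mem_iff]
        push_neg
        exact ⟨hu'u, hu'v⟩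
      · intro hu'f
        exact hM.2 e heM f (Finset.mem_of_mem_erase hf1)
          (fun h => (Finset.mem_erase.mp hf1).1 h.symm) u' hu'e hu'f
    have hu'core : u' ∈ coreSet T := missed_mem_core hM'matching (by omega) hu'miss
    have hsub : ({v, u'} : Finset V) ⊆ coreSet T := by
      intro x hx
      rcases Finset.mem_insert.mp hx with hx1 | hx1
      · exact hx1 ▸ hvcore
      · exact (Finset.mem_singleton.mp hx1) ▸ hu'core
    calc (2 : ℕ) = ({v, u'} : Finset V).card := (Finset.card_pair (Ne.symm hu'v)).symm
      _ ≤ (coreSet T).card := Finset.card_le_card hsub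
  · -- |core| ≥ 2 → α > n/2
    intro hcore
    by_contra hle
    push_neg at hle
    obtain ⟨A, B, hAB, hABu, hAstable, hBstable⟩ :=
      tree_bipartition hT (Classical.arbitrary V)
    have hsum : A.card + B.card = Fintype.card V := by
      rw [← Finset.card_union_of_disjoint hAB, hABu, Finset.card_univ]
    have hAle : A.card ≤ alphaNum T := stable_card_le_alpha hAstable
    have hBle : B.card ≤ alphaNum T := stable_card_le_alpha hBstable
    have heq : Fintype.card V = 2 * alphaNum T := by omega
    -- core is nonempty
    obtain ⟨v, hvcore⟩ := Finset.card_pos.mp (by omega : 0 < (coreSet T).card)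
    rw [mem_coreSet] at hvcore
    -- but some maximum stable set avoids v
    have hvAB : v ∈ A ∪ B := hABu ▸ Finset.mem_univ v
    have hcards : (A.erase v).card + (B.erase v).card = Fintype.card V - 1 := by
      rcases Finset.mem_union.mp hvAB with hvA | hvB
      · have hvB : v ∉ B := fun h => (Finset.disjoint_left.mp hAB) hvA h
        rw [Finset.card_erase_of_mem hvA, Finset.erase_eq_of_notMem hvB]
        have : 1 ≤ A.card := Finset.card_pos.mpr ⟨v, hvA⟩
        omega
      · have hvA : v ∉ A := fun h => (Finset.disjoint_left.mp hAB) h hvB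
        rw [Finset.card_erase_of_mem hvB, Finset.erase_eq_of_notMem hvA]
        have : 1 ≤ B.card := Finset.card_pos.mpr ⟨v, hvB⟩
        omega
    have hA'stable : stableSet T (A.erase v) :=
      fun x hx y hy => hAstable x (Finset.mem_of_mem_erase hx) y (Finset.mem_of_mem_erase hy)
    have hB'stable : stableSet T (B.erase v) :=
      fun x hx y hy => hBstable x (Finset.mem_of_mem_erase hx) y (Finset.mem_of_mem_erase hy)
    have hA'le : (A.erase v).card ≤ alphaNum T := stable_card_le_alpha hA'stable
    have hB'le : (B.erase v).card ≤ alphaNum T := stable_card_le_alpha hB'stable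
    have hbig : alphaNum T ≤ (A.erase v).card ∨ alphaNum T ≤ (B.erase v).card := by omega
    rcases hbig with hbig | hbig
    · have hmax : maxStableSet T (A.erase v) :=
        ⟨hA'stable, fun S' hS' => le_trans (stable_card_le_alpha hS') hbig⟩
      exact (Finset.mem_erase.mp (hvcore _ hmax)).1 rfl
    · have hmax : maxStableSet T (B.erase v) :=
        ⟨hB'stable, fun S' hS' => le_trans (stable_card_le_alpha hS') hbig⟩
      exact (Finset.mem_erase.mp (hvcore _ hmax)).1 rfl
end

section
/- Let T₁, T₂ be trees and T = T₁ * v * T₂ their vertex bonding at a vertex v. If v ∈ core(T), then core(T) = core(T₁) ∪ core(T₂). -/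
open Finset SimpleGraph
open scoped Classical

variable {V : Type*}

/-- Stable sets of the subtree induced on a vertex set `A`. -/
def stableIn (G : SimpleGraph V) (A S : Finset V) : Prop :=
  S ⊆ A ∧ stableSet G S

/-- Maximum stable sets of the subtree induced on `A`. -/
def maxStableIn [Fintype V] (G : SimpleGraph V) (A S : Finset V) : Prop :=
  stableIn G A S ∧ ∀ S' : Finset V, stableIn G A S' → S'.card ≤ S.card

/-- The independence number of the subtree induced on `A`. -/
noncomputable def alphaIn [Fintype V] (G : SimpleGraph V) (A : Finset V) : ℕ :=
  (A.powerset.filter (fun S => stableSet G S)).sup Finset.card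

/-- The core of the subtree induced on `A`. -/
noncomputable def coreIn [Fintype V] (G : SimpleGraph V) (A : Finset V) : Finset V :=
  A.filter (fun x => ∀ S : Finset V, maxStableIn G A S → x ∈ S)

/-- `T` is the vertex bonding `T₁ * v * T₂` of the trees `T₁` and `T₂`, induced
on the vertex sets `A` and `B` respectively, identified at the vertex `v`. -/
def isBonding [Fintype V] (T : SimpleGraph V) (v : V) (A B : Finset V) : Prop :=
  T.IsTree ∧ (T.induce (A : Set V)).IsTree ∧ (T.induce (B : Set V)).IsTree ∧
  A ∩ B = {v} ∧ A ∪ B = Finset.univ ∧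
  ∀ x y : V, T.Adj x y → (x ∈ A ∧ y ∈ A) ∨ (x ∈ B ∧ y ∈ B)

section Helpers

variable [Fintype V] {T : SimpleGraph V} {v : V} {A B : Finset V}

lemma stableSet_subset {S S' : Finset V} (h : stableSet T S) (hs : S' ⊆ S) :
    stableSet T S' := fun u hu w hw => h u (hs hu) w (hs hw)

lemma exists_maxStableIn (T : SimpleGraph V) (A : Finset V) :
    ∃ S, maxStableIn T A S := by
  classical
  obtain ⟨S, hS, hmax⟩ := Finset.exists_max_image
    (A.powerset.filter (fun S => stableSet T S)) Finset.card
    ⟨∅, Finset.mem_filter.2 ⟨Finset.empty_mem_powerset _, fun u hu => by simp at hu⟩⟩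
  rw [Finset.mem_filter, Finset.mem_powerset] at hS
  refine ⟨S, ⟨hS.1, hS.2⟩, fun S' hS' => hmax S' ?_⟩
  rw [Finset.mem_filter, Finset.mem_powerset]
  exact ⟨hS'.1, hS'.2⟩

lemma exists_maxStableSet_s16 (T : SimpleGraph V) [Fintype V] :
    ∃ S, maxStableSet T S := by
  classical
  obtain ⟨S, hS, hmax⟩ := Finset.exists_max_image
    ((Finset.univ : Finset V).powerset.filter (fun S => stableSet T S)) Finset.card
    ⟨∅, by simp [stableSet]⟩
  rw [Finset.mem_filter, Finset.mem_powerset] at hS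
  exact ⟨S, hS.2, fun S' hS' => hmax S' (by
    rw [Finset.mem_filter, Finset.mem_powerset]; exact ⟨Finset.subset_univ _, hS'⟩)⟩

lemma union_stable (hAB : A ∩ B = {v})
    (hE : ∀ x y : V, T.Adj x y → (x ∈ A ∧ y ∈ A) ∨ (x ∈ B ∧ y ∈ B))
    {S₁ S₂ : Finset V} (h1 : S₁ ⊆ A) (h2 : S₂ ⊆ B)
    (hs1 : stableSet T S₁) (hs2 : stableSet T S₂)
    (hvv : v ∈ S₁ ↔ v ∈ S₂) : stableSet T (S₁ ∪ S₂) := by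
  have key1 : ∀ x ∈ S₁ ∪ S₂, x ∈ A → x ∈ S₁ := by
    intro x hx hxA
    rcases Finset.mem_union.1 hx with h | h
    · exact h
    · have : x ∈ A ∩ B := Finset.mem_inter.2 ⟨hxA, h2 h⟩
      rw [hAB, Finset.mem_singleton] at this
      subst this
      exact hvv.2 h
  have key2 : ∀ x ∈ S₁ ∪ S₂, x ∈ B → x ∈ S₂ := by
    intro x hx hxB
    rcases Finset.mem_union.1 hx with h | h
    · have : x ∈ A ∩ B := Finset.mem_inter.2 ⟨h1 h, hxB⟩
      rw [hAB, Finset.mem_singleton] at this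
      subst this
      exact hvv.1 h
    · exact h
  intro u hu w hw hadj
  rcases hE u w hadj with ⟨huA, hwA⟩ | ⟨huB, hwB⟩
  · exact hs1 u (key1 u hu huA) w (key1 w hw hwA) hadj
  · exact hs2 u (key2 u hu huB) w (key2 w hw hwB) hadj

lemma card_union_of_mem (hAB : A ∩ B = {v}) {S₁ S₂ : Finset V}
    (h1 : S₁ ⊆ A) (h2 : S₂ ⊆ B) (hv1 : v ∈ S₁) (hv2 : v ∈ S₂) :
    (S₁ ∪ S₂).card + 1 = S₁.card + S₂.card := by
  have hint : S₁ ∩ S₂ = {v} := by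
    apply Finset.Subset.antisymm
    · exact (Finset.inter_subset_inter h1 h2).trans (by rw [hAB])
    · exact Finset.singleton_subset_iff.2 (Finset.mem_inter.2 ⟨hv1, hv2⟩)
  have := Finset.card_union_add_card_inter S₁ S₂
  rw [hint, Finset.card_singleton] at this
  omega

lemma card_union_of_not_mem (hAB : A ∩ B = {v}) {S₁ S₂ : Finset V}
    (h1 : S₁ ⊆ A) (h2 : S₂ ⊆ B) (hv1 : v ∉ S₁) :
    (S₁ ∪ S₂).card = S₁.card + S₂.card := by
  have hint : S₁ ∩ S₂ = ∅ := by
    rw [Finset.eq_empty_iff_forall_notMem]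
    intro x hx
    have : x ∈ A ∩ B := Finset.mem_inter.2
      ⟨h1 (Finset.mem_inter.1 hx).1, h2 (Finset.mem_inter.1 hx).2⟩
    rw [hAB, Finset.mem_singleton] at this
    subst this
    exact hv1 (Finset.mem_inter.1 hx).1
  have := Finset.card_union_add_card_inter S₁ S₂
  rw [hint, Finset.card_empty] at this
  omega

lemma card_decomp (hAB : A ∩ B = {v}) (hU : A ∪ B = Finset.univ)
    {S : Finset V} (hvS : v ∈ S) :
    S.card + 1 = (S ∩ A).card + (S ∩ B).card := by
  have h1 : (S ∩ A) ∪ (S ∩ B) = S := by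
    rw [← Finset.inter_union_distrib_left, hU, Finset.inter_univ]
  have h2 : (S ∩ A) ∩ (S ∩ B) = {v} := by
    have hvAB : v ∈ A ∩ B := hAB ▸ Finset.mem_singleton_self v
    ext x
    simp only [Finset.mem_inter, Finset.mem_singleton]
    constructor
    · rintro ⟨⟨hxS, hxA⟩, _, hxB⟩
      have : x ∈ A ∩ B := Finset.mem_inter.2 ⟨hxA, hxB⟩
      rw [hAB, Finset.mem_singleton] at this
      exact this
    · rintro rfl
      exact ⟨⟨hvS, (Finset.mem_inter.1 hvAB).1⟩, hvS, (Finset.mem_inter.1 hvAB).2⟩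
  have := Finset.card_union_add_card_inter (S ∩ A) (S ∩ B)
  rw [h1, h2, Finset.card_singleton] at this
  omega

/-- Every maximum stable set of the part `A` contains `v`. -/
lemma key_v_mem (hAB : A ∩ B = {v}) (hU : A ∪ B = Finset.univ)
    (hE : ∀ x y : V, T.Adj x y → (x ∈ A ∧ y ∈ A) ∨ (x ∈ B ∧ y ∈ B))
    (hcore : ∀ S, maxStableSet T S → v ∈ S) :
    ∀ S₁, maxStableIn T A S₁ → v ∈ S₁ := by
  intro S₁ hS₁
  by_contra hv1
  obtain ⟨S₂, hS₂⟩ := exists_maxStableIn T B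
  obtain ⟨M, hM⟩ := exists_maxStableSet_s16 T
  have hvM : v ∈ M := hcore M hM
  have hMcard : M.card + 1 = (M ∩ A).card + (M ∩ B).card := card_decomp hAB hU hvM
  have hMA : (M ∩ A).card ≤ S₁.card :=
    hS₁.2 _ ⟨Finset.inter_subset_right, stableSet_subset hM.1 Finset.inter_subset_left⟩
  have hMB : (M ∩ B).card ≤ S₂.card :=
    hS₂.2 _ ⟨Finset.inter_subset_right, stableSet_subset hM.1 Finset.inter_subset_left⟩
  by_cases hv2 : v ∈ S₂
  · -- use S₂.erase v
    set S₂' := S₂.erase v with hS₂'def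
    have h2' : S₂' ⊆ B := (Finset.erase_subset _ _).trans hS₂.1.1
    have hv2' : v ∉ S₂' := Finset.notMem_erase _ _
    have hstab : stableSet T (S₁ ∪ S₂') :=
      union_stable hAB hE hS₁.1.1 h2' hS₁.1.2
        (stableSet_subset hS₂.1.2 (Finset.erase_subset _ _))
        (by simp [hv1, hv2'])
    have hcard : (S₁ ∪ S₂').card = S₁.card + S₂'.card :=
      card_union_of_not_mem hAB hS₁.1.1 h2' hv1
    have hS₂'card : S₂'.card + 1 = S₂.card := Finset.card_erase_add_one hv2
    have hle : (S₁ ∪ S₂').card ≤ M.card := hM.2 _ hstab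
    have hUmax : maxStableSet T (S₁ ∪ S₂') :=
      ⟨hstab, fun S' hS' => (hM.2 S' hS').trans (by omega)⟩
    have := hcore _ hUmax
    rcases Finset.mem_union.1 this with h | h
    · exact hv1 h
    · exact hv2' h
  · have hstab : stableSet T (S₁ ∪ S₂) :=
      union_stable hAB hE hS₁.1.1 hS₂.1.1 hS₁.1.2 hS₂.1.2 (by simp [hv1, hv2])
    have hcard : (S₁ ∪ S₂).card = S₁.card + S₂.card :=
      card_union_of_not_mem hAB hS₁.1.1 hS₂.1.1 hv1
    have hle : (S₁ ∪ S₂).card ≤ M.card := hM.2 _ hstab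
    omega

/-- If `S` is a maximum stable set of `T`, then `S ∩ A` is a maximum stable
set of the part `A`. -/
lemma key_restrict (hAB : A ∩ B = {v}) (hU : A ∪ B = Finset.univ)
    (hE : ∀ x y : V, T.Adj x y → (x ∈ A ∧ y ∈ A) ∨ (x ∈ B ∧ y ∈ B))
    (hcore : ∀ S, maxStableSet T S → v ∈ S)
    {S : Finset V} (hS : maxStableSet T S) : maxStableIn T A (S ∩ A) := by
  have hvS : v ∈ S := hcore S hS
  have hScard : S.card + 1 = (S ∩ A).card + (S ∩ B).card := card_decomp hAB hU hvS
  obtain ⟨S₂, hS₂⟩ := exists_maxStableIn T B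
  have hvB : ∀ S', maxStableIn T B S' → v ∈ S' :=
    key_v_mem (by rw [Finset.inter_comm]; exact hAB) (by rw [Finset.union_comm]; exact hU)
      (fun x y h => (hE x y h).symm) hcore
  have hv2 : v ∈ S₂ := hvB S₂ hS₂
  have hSB : (S ∩ B).card ≤ S₂.card :=
    hS₂.2 _ ⟨Finset.inter_subset_right, stableSet_subset hS.1 Finset.inter_subset_left⟩
  refine ⟨⟨Finset.inter_subset_right, stableSet_subset hS.1 Finset.inter_subset_left⟩, ?_⟩
  intro S₁ hS₁
  by_cases hv1 : v ∈ S₁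
  · have hstab : stableSet T (S₁ ∪ S₂) :=
      union_stable hAB hE hS₁.1 hS₂.1.1 hS₁.2 hS₂.1.2 (by simp [hv1, hv2])
    have hcard : (S₁ ∪ S₂).card + 1 = S₁.card + S₂.card :=
      card_union_of_mem hAB hS₁.1 hS₂.1.1 hv1 hv2
    have hle : (S₁ ∪ S₂).card ≤ S.card := hS.2 _ hstab
    omega
  · set S₂' := S₂.erase v with hS₂'def
    have h2' : S₂' ⊆ B := (Finset.erase_subset _ _).trans hS₂.1.1
    have hv2' : v ∉ S₂' := Finset.notMem_erase _ _
    have hstab : stableSet T (S₁ ∪ S₂') :=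
      union_stable hAB hE hS₁.1 h2' hS₁.2
        (stableSet_subset hS₂.1.2 (Finset.erase_subset _ _)) (by simp [hv1, hv2'])
    have hcard : (S₁ ∪ S₂').card = S₁.card + S₂'.card :=
      card_union_of_not_mem hAB hS₁.1 h2' hv1
    have hS₂'card : S₂'.card + 1 = S₂.card := Finset.card_erase_add_one hv2
    have hle : (S₁ ∪ S₂').card ≤ S.card := hS.2 _ hstab
    omega

/-- Unions of maximum stable sets of the two parts are maximum stable sets
of `T`. -/
lemma key_union_max (hAB : A ∩ B = {v}) (hU : A ∪ B = Finset.univ)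
    (hE : ∀ x y : V, T.Adj x y → (x ∈ A ∧ y ∈ A) ∨ (x ∈ B ∧ y ∈ B))
    (hcore : ∀ S, maxStableSet T S → v ∈ S)
    {S₁ S₂ : Finset V} (hS₁ : maxStableIn T A S₁) (hS₂ : maxStableIn T B S₂) :
    maxStableSet T (S₁ ∪ S₂) := by
  have hv1 : v ∈ S₁ := key_v_mem hAB hU hE hcore S₁ hS₁
  have hv2 : v ∈ S₂ :=
    key_v_mem (by rw [Finset.inter_comm]; exact hAB) (by rw [Finset.union_comm]; exact hU)
      (fun x y h => (hE x y h).symm) hcore S₂ hS₂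
  have hstab : stableSet T (S₁ ∪ S₂) :=
    union_stable hAB hE hS₁.1.1 hS₂.1.1 hS₁.1.2 hS₂.1.2 (by simp [hv1, hv2])
  have hcard : (S₁ ∪ S₂).card + 1 = S₁.card + S₂.card :=
    card_union_of_mem hAB hS₁.1.1 hS₂.1.1 hv1 hv2
  obtain ⟨M, hM⟩ := exists_maxStableSet_s16 T
  have hvM : v ∈ M := hcore M hM
  have hMcard : M.card + 1 = (M ∩ A).card + (M ∩ B).card := card_decomp hAB hU hvM
  have hMA : (M ∩ A).card ≤ S₁.card :=
    hS₁.2 _ ⟨Finset.inter_subset_right, stableSet_subset hM.1 Finset.inter_subset_left⟩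
  have hMB : (M ∩ B).card ≤ S₂.card :=
    hS₂.2 _ ⟨Finset.inter_subset_right, stableSet_subset hM.1 Finset.inter_subset_left⟩
  exact ⟨hstab, fun S' hS' => (hM.2 S' hS').trans (by omega)⟩

end Helpers

theorem stmt16 [Fintype V] (T : SimpleGraph V) (v : V) (A B : Finset V)
    (hbond : isBonding T v A B) (hv : v ∈ coreSet T) :
    coreSet T = coreIn T A ∪ coreIn T B := by
  obtain ⟨-, -, -, hAB, hU, hE⟩ := hbond
  have hcore : ∀ S, maxStableSet T S → v ∈ S := by
    simp only [coreSet, Finset.mem_filter, Finset.mem_univ, true_and] at hv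
    exact hv
  have hAB' : B ∩ A = {v} := by rw [Finset.inter_comm]; exact hAB
  have hU' : B ∪ A = Finset.univ := by rw [Finset.union_comm]; exact hU
  have hE' : ∀ x y : V, T.Adj x y → (x ∈ B ∧ y ∈ B) ∨ (x ∈ A ∧ y ∈ A) :=
    fun x y h => (hE x y h).symm
  ext x
  simp only [coreSet, coreIn, Finset.mem_union, Finset.mem_filter, Finset.mem_univ, true_and]
  constructor
  · intro hx
    have hxAB : x ∈ A ∨ x ∈ B := by
      have : x ∈ A ∪ B := hU ▸ Finset.mem_univ x
      exact Finset.mem_union.1 this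
    rcases hxAB with hxA | hxB
    · left
      refine ⟨hxA, fun S₁ hS₁ => ?_⟩
      obtain ⟨S₂, hS₂⟩ := exists_maxStableIn T B
      have hmax := key_union_max hAB hU hE hcore hS₁ hS₂
      rcases Finset.mem_union.1 (hx _ hmax) with h | h
      · exact h
      · have : x ∈ A ∩ B := Finset.mem_inter.2 ⟨hxA, hS₂.1.1 h⟩
        rw [hAB, Finset.mem_singleton] at this
        subst this
        exact key_v_mem hAB hU hE hcore S₁ hS₁
    · right
      refine ⟨hxB, fun S₂ hS₂ => ?_⟩
      obtain ⟨S₁, hS₁⟩ := exists_maxStableIn T A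
      have hmax := key_union_max hAB' hU' hE' hcore hS₂ hS₁
      rcases Finset.mem_union.1 (hx _ hmax) with h | h
      · exact h
      · have : x ∈ A ∩ B := Finset.mem_inter.2 ⟨hS₁.1.1 h, hxB⟩
        rw [hAB, Finset.mem_singleton] at this
        subst this
        exact key_v_mem hAB' hU' hE' hcore S₂ hS₂
  · rintro (⟨hxA, hx⟩ | ⟨hxB, hx⟩) <;> intro S hS
    · exact Finset.inter_subset_left (hx _ (key_restrict hAB hU hE hcore hS))
    · exact Finset.inter_subset_left (hx _ (key_restrict hAB' hU' hE' hcore hS))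
end
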